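/- arXiv:2305.19047 — 2 statements merged into one kernel-verified Lean document; each statement's English description precedes it below -/
import Mathlib

section
/- Let 𝒞 be a set of n unit vectors in ℝ^r whose pairwise inner products are all at most α, with 0 ≤ α < 1, and let M be the Gram matrix of 𝒞. Then tr(M²) ≤ 2n + α²n² + (27/4)(1 + αn)² αn. -/
/-!
Split every Gram entry as `x = x⁺ - x⁻`, so that `tr(M²) = ∑ (x⁺)² + ∑ (x⁻)²`. Each row
contributes at most `1 + α²n` to the positive part. For the negative part, the Gram form of
nonnegative weights `a` is at most `∑ aᵢ² + α (∑ aᵢ)²`. With `γᵢ = ∑ⱼ ⟪vᵢ, vⱼ⟫⁻`,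
Cauchy–Schwarz between `vᵢ` and `∑ⱼ ⟪vᵢ, vⱼ⟫⁻ • vⱼ` bounds row `i` by `1 + α γᵢ²`, and
Cauchy–Schwarz between `∑ᵢ γᵢ • vᵢ` and `∑ⱼ vⱼ` gives `∑ γᵢ² ≤ 3 n (1 + α n)²`, which is below
the constant `27/4`.
-/

open Finset RealInnerProductSpace

lemma negPart_mul_self (x : ℝ) : x⁻ * x = -x⁻ ^ 2 := by
  rcases le_total 0 x with hx | hx
  · simp [negPart_of_nonneg hx]
  · rw [negPart_of_nonpos hx]; ring

lemma sq_eq_posPart_sq_add_negPart_sq (x : ℝ) : x ^ 2 = x⁺ ^ 2 + x⁻ ^ 2 := by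
  rcases le_total 0 x with hx | hx
  · simp [posPart_of_nonneg hx, negPart_of_nonneg hx]
  · simp [posPart_of_nonpos hx, negPart_of_nonpos hx]

lemma sum_le_add_mul_card {ι : Type*} [Fintype ι] {f : ι → ℝ} {i : ι} {a b : ℝ} (hb : 0 ≤ b)
    (hi : f i ≤ a) (hne : ∀ j, j ≠ i → f j ≤ b) : ∑ j, f j ≤ a + b * Fintype.card ι := by
  classical
  calc ∑ j, f j ≤ ∑ j, ((if j = i then a else 0) + b) := sum_le_sum fun j _ => by
        by_cases h : j = i
        · subst h; simpa using hi.trans (le_add_of_nonneg_right hb)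
        · simpa [h] using hne j h
    _ = a + b * Fintype.card ι := by simp [sum_add_distrib, mul_comm]

lemma le_three_mul_of_sq_sub_le {G D K : ℝ} (hD : 0 ≤ D) (hDK : D ≤ K)
    (h : (G - D) ^ 2 ≤ K * G + K ^ 2) : G ≤ 3 * K := by
  by_contra! hG
  have : (G - K) ^ 2 ≤ (G - D) ^ 2 := by nlinarith
  nlinarith

section

variable {E ι : Type*} [NormedAddCommGroup E] [InnerProductSpace ℝ E] [Fintype ι]
  {v : ι → E} {α : ℝ}

lemma norm_sum_smul_sq_le (hunit : ∀ i, ‖v i‖ = 1) (hpair : ∀ i j, i ≠ j → ⟪v i, v j⟫ ≤ α)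
    {a : ι → ℝ} (ha : ∀ i, 0 ≤ a i) :
    ‖∑ i, a i • v i‖ ^ 2 ≤ (1 - α) * ∑ i, a i ^ 2 + α * (∑ i, a i) ^ 2 := by
  classical
  have hentry : ∀ i j, a i * a j * ⟪v i, v j⟫ ≤
      (if i = j then (1 - α) * a i ^ 2 else 0) + α * (a i * a j) := by
    intro i j
    by_cases hij : i = j
    · subst hij
      rw [if_pos rfl, real_inner_self_eq_norm_sq, hunit]
      exact le_of_eq (by ring)
    · rw [if_neg hij]
      nlinarith [hpair i j hij, mul_nonneg (ha i) (ha j)]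
  calc ‖∑ i, a i • v i‖ ^ 2 = ∑ i, ∑ j, a i * a j * ⟪v i, v j⟫ := by
        simp_rw [← real_inner_self_eq_norm_sq, sum_inner, inner_sum, real_inner_smul_left,
          real_inner_smul_right, mul_assoc]
    _ ≤ ∑ i, ∑ j, ((if i = j then (1 - α) * a i ^ 2 else 0) + α * (a i * a j)) :=
        sum_le_sum fun i _ => sum_le_sum fun j _ => hentry i j
    _ = (1 - α) * ∑ i, a i ^ 2 + α * (∑ i, a i) ^ 2 := by
        simp_rw [sum_add_distrib, sum_ite_eq, if_pos (mem_univ _), ← mul_sum, ← sum_mul, sq]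

/-- `γ(u)` in the paper. -/
def negInnerSum (v : ι → E) (i : ι) : ℝ := ∑ j, ⟪v i, v j⟫⁻

def posInnerSum (v : ι → E) (i : ι) : ℝ := ∑ j, ⟪v i, v j⟫⁺

lemma negInnerSum_nonneg (v : ι → E) (i : ι) : 0 ≤ negInnerSum v i :=
  sum_nonneg fun _ _ => negPart_nonneg _

lemma posInnerSum_nonneg (v : ι → E) (i : ι) : 0 ≤ posInnerSum v i :=
  sum_nonneg fun _ _ => posPart_nonneg _

lemma inner_sum_eq_posInnerSum_sub_negInnerSum (v : ι → E) (i : ι) :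
    ⟪v i, ∑ j, v j⟫ = posInnerSum v i - negInnerSum v i := by
  simp_rw [posInnerSum, negInnerSum, ← sum_sub_distrib, posPart_sub_negPart, inner_sum]

lemma posInnerSum_le (hunit : ∀ i, ‖v i‖ = 1) (hpair : ∀ i j, i ≠ j → ⟪v i, v j⟫ ≤ α)
    (hα : 0 ≤ α) (i : ι) : posInnerSum v i ≤ 1 + α * Fintype.card ι :=
  sum_le_add_mul_card hα (by simp [hunit])
    fun j hj => sup_le (hpair i j hj.symm) hα

lemma sum_posPart_sq_le (hunit : ∀ i, ‖v i‖ = 1) (hpair : ∀ i j, i ≠ j → ⟪v i, v j⟫ ≤ α)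
    (hα : 0 ≤ α) (i : ι) : ∑ j, ⟪v i, v j⟫⁺ ^ 2 ≤ 1 + α ^ 2 * Fintype.card ι :=
  sum_le_add_mul_card (sq_nonneg α) (by simp [hunit])
    fun j hj => pow_le_pow_left₀ (posPart_nonneg _) (sup_le (hpair i j hj.symm) hα) 2

lemma sum_negPart_sq_le (hunit : ∀ i, ‖v i‖ = 1) (hpair : ∀ i j, i ≠ j → ⟪v i, v j⟫ ≤ α)
    (hα : 0 ≤ α) (i : ι) : ∑ j, ⟪v i, v j⟫⁻ ^ 2 ≤ 1 + α * negInnerSum v i ^ 2 := by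
  set S := ∑ j, ⟪v i, v j⟫⁻ ^ 2
  set w := ∑ j, ⟪v i, v j⟫⁻ • v j
  have hS : 0 ≤ S := sum_nonneg fun _ _ => sq_nonneg _
  have hinner : ⟪v i, w⟫ = -S := by
    simp_rw [w, S, inner_sum, real_inner_smul_right, negPart_mul_self, sum_neg_distrib]
  have hw : ‖w‖ ^ 2 ≤ S + α * negInnerSum v i ^ 2 := by
    have := norm_sum_smul_sq_le hunit hpair (a := fun j => ⟪v i, v j⟫⁻) fun _ => negPart_nonneg _
    rw [negInnerSum]
    nlinarith
  have hCS : S ^ 2 ≤ ‖w‖ ^ 2 := by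
    have := abs_real_inner_le_norm (v i) w
    rw [hinner, abs_neg, abs_of_nonneg hS, hunit, one_mul] at this
    exact pow_le_pow_left₀ hS this 2
  nlinarith [mul_nonneg hα (sq_nonneg (negInnerSum v i))]

lemma norm_sum_sq_eq (v : ι → E) :
    ‖∑ j, v j‖ ^ 2 = ∑ i, (posInnerSum v i - negInnerSum v i) := by
  simp_rw [← real_inner_self_eq_norm_sq, sum_inner (s := univ) (f := v),
    inner_sum_eq_posInnerSum_sub_negInnerSum]

lemma sum_negInnerSum_le_sum_posInnerSum (v : ι → E) :
    ∑ i, negInnerSum v i ≤ ∑ i, posInnerSum v i := by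
  have := norm_sum_sq_eq v
  rw [sum_sub_distrib] at this
  linarith [sq_nonneg ‖∑ j, v j‖]

lemma sum_posInnerSum_le (hunit : ∀ i, ‖v i‖ = 1) (hpair : ∀ i j, i ≠ j → ⟪v i, v j⟫ ≤ α)
    (hα : 0 ≤ α) : ∑ i, posInnerSum v i ≤ Fintype.card ι * (1 + α * Fintype.card ι) :=
  (sum_le_sum fun i _ => posInnerSum_le hunit hpair hα i).trans_eq (by simp [mul_add])

lemma sum_negInnerSum_le (hunit : ∀ i, ‖v i‖ = 1) (hpair : ∀ i j, i ≠ j → ⟪v i, v j⟫ ≤ α)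
    (hα : 0 ≤ α) : ∑ i, negInnerSum v i ≤ Fintype.card ι * (1 + α * Fintype.card ι) :=
  (sum_negInnerSum_le_sum_posInnerSum v).trans (sum_posInnerSum_le hunit hpair hα)

lemma norm_sum_sq_le (hunit : ∀ i, ‖v i‖ = 1) (hpair : ∀ i j, i ≠ j → ⟪v i, v j⟫ ≤ α)
    (hα : 0 ≤ α) : ‖∑ j, v j‖ ^ 2 ≤ Fintype.card ι * (1 + α * Fintype.card ι) := by
  rw [norm_sum_sq_eq, sum_sub_distrib]
  linarith [sum_posInnerSum_le hunit hpair hα, sum_nonneg fun i (_ : i ∈ univ) =>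
    negInnerSum_nonneg v i]

theorem sum_sq_negInnerSum_le (hunit : ∀ i, ‖v i‖ = 1) (hpair : ∀ i j, i ≠ j → ⟪v i, v j⟫ ≤ α)
    (hα : 0 ≤ α) :
    ∑ i, negInnerSum v i ^ 2 ≤
      3 * (Fintype.card ι * (1 + α * Fintype.card ι) ^ 2) := by
  set n : ℝ := (Fintype.card ι : ℝ)
  set β := 1 + α * n
  set γ := negInnerSum v
  set P := posInnerSum v
  set s := ∑ j, v j
  set z := ∑ i, γ i • v i
  have hγ : ∀ i, 0 ≤ γ i := negInnerSum_nonneg v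
  have hP : ∀ i, P i ≤ β := posInnerSum_le hunit hpair hα
  have hβ : 1 ≤ β := le_add_of_nonneg_right (by positivity)
  have hsumγ : ∑ i, γ i ≤ n * β := sum_negInnerSum_le hunit hpair hα
  have hs : ‖s‖ ^ 2 ≤ n * β := norm_sum_sq_le hunit hpair hα
  have hz : ‖z‖ ^ 2 ≤ ∑ i, γ i ^ 2 + α * (n * β) ^ 2 := by
    have := norm_sum_smul_sq_le hunit hpair hγ
    have := pow_le_pow_left₀ (sum_nonneg fun i _ => hγ i) hsumγ 2
    nlinarith [sum_nonneg fun i (_ : i ∈ univ) => sq_nonneg (γ i)]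
  have hzs : ⟪z, s⟫ = ∑ i, γ i * P i - ∑ i, γ i ^ 2 := by
    simp_rw [z, s, sum_inner, real_inner_smul_left, inner_sum_eq_posInnerSum_sub_negInnerSum,
      ← sum_sub_distrib, mul_sub, sq]
    rfl
  have hD : ∑ i, γ i * P i ≤ n * β ^ 2 := calc
    ∑ i, γ i * P i ≤ ∑ i, γ i * β :=
        sum_le_sum fun i _ => mul_le_mul_of_nonneg_left (hP i) (hγ i)
    _ ≤ n * β ^ 2 := by rw [← sum_mul]; nlinarith
  refine le_three_mul_of_sq_sub_le
    (sum_nonneg fun i _ => mul_nonneg (hγ i) (posInnerSum_nonneg v i)) hD ?_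
  calc (∑ i, γ i ^ 2 - ∑ i, γ i * P i) ^ 2 = ⟪z, s⟫ ^ 2 := by rw [hzs]; ring
    _ ≤ ‖z‖ ^ 2 * ‖s‖ ^ 2 := by
        rw [← mul_pow]; exact sq_le_sq.mpr ((abs_real_inner_le_norm z s).trans (le_abs_self _))
    _ ≤ (∑ i, γ i ^ 2 + α * (n * β) ^ 2) * (n * β) :=
        mul_le_mul hz hs (sq_nonneg _) (by positivity)
    _ ≤ n * β ^ 2 * ∑ i, γ i ^ 2 + (n * β ^ 2) ^ 2 := by
        have hαn : α * n ≤ β := by simp [β]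
        have hG : 0 ≤ n * ∑ i, γ i ^ 2 := by positivity
        nlinarith [mul_le_mul_of_nonneg_left hβ hG,
          mul_le_mul_of_nonneg_right hαn (by positivity : 0 ≤ n ^ 2 * β ^ 3)]

theorem sum_sq_inner_le (hunit : ∀ i, ‖v i‖ = 1) (hpair : ∀ i j, i ≠ j → ⟪v i, v j⟫ ≤ α)
    (hα : 0 ≤ α) :
    ∑ i, ∑ j, ⟪v i, v j⟫ ^ 2 ≤ 2 * Fintype.card ι + α ^ 2 * Fintype.card ι ^ 2 +
      3 * α * (Fintype.card ι * (1 + α * Fintype.card ι) ^ 2) := by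
  have hpos := sum_le_sum fun i (_ : i ∈ univ) => sum_posPart_sq_le hunit hpair hα i
  have hneg := sum_le_sum fun i (_ : i ∈ univ) => sum_negPart_sq_le hunit hpair hα i
  have hγ := mul_le_mul_of_nonneg_left (sum_sq_negInnerSum_le hunit hpair hα) hα
  simp only [sum_add_distrib, ← mul_sum, sum_const, card_univ, nsmul_eq_mul] at hpos hneg
  have hsplit : ∑ i, ∑ j, ⟪v i, v j⟫ ^ 2 =
      ∑ i, ∑ j, ⟪v i, v j⟫⁺ ^ 2 + ∑ i, ∑ j, ⟪v i, v j⟫⁻ ^ 2 := by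
    simp only [← sum_add_distrib, ← sq_eq_posPart_sq_add_negPart_sq]
  linarith

end

theorem trace_gram_sq_bound_general {d n : ℕ} (α : ℝ) (hα0 : 0 ≤ α)
    (v : Fin n → EuclideanSpace ℝ (Fin d))
    (hunit : ∀ i, ‖v i‖ = 1)
    (hpair : ∀ i j, i ≠ j → (inner ℝ (v i) (v j) : ℝ) ≤ α)
    (M : Matrix (Fin n) (Fin n) ℝ)
    (hM : ∀ i j, M i j = (inner ℝ (v i) (v j) : ℝ)) :
    Matrix.trace (M * M) ≤ 2 * n + α ^ 2 * n ^ 2 + 27 / 4 * (1 + α * n) ^ 2 * (α * n) := by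
  have htrace : Matrix.trace (M * M) = ∑ i, ∑ j, ⟪v i, v j⟫ ^ 2 := by
    simp only [Matrix.trace, Matrix.diag_apply, Matrix.mul_apply, hM]
    exact sum_congr rfl fun i _ => sum_congr rfl fun j _ => by rw [real_inner_comm (v i), sq]
  have hbound := sum_sq_inner_le hunit hpair hα0
  rw [Fintype.card_fin] at hbound
  have : 0 ≤ α * n * (1 + α * n) ^ 2 := by positivity
  rw [htrace]
  linarith

theorem trace_gram_sq_bound {d n : ℕ} (α : ℝ) (hα0 : 0 ≤ α) (hα1 : α < 1)
    (v : Fin n → EuclideanSpace ℝ (Fin d))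
    (hunit : ∀ i, ‖v i‖ = 1)
    (hpair : ∀ i j, i ≠ j → (inner ℝ (v i) (v j) : ℝ) ≤ α)
    (M : Matrix (Fin n) (Fin n) ℝ)
    (hM : ∀ i j, M i j = (inner ℝ (v i) (v j) : ℝ)) :
    Matrix.trace (M * M) ≤ 2 * n + α ^ 2 * n ^ 2 + 27 / 4 * (1 + α * n) ^ 2 * (α * n) :=
  trace_gram_sq_bound_general α hα0 v hunit hpair M hM
end

section
/- Let 0 ≤ α < 1 and let u, v₁, …, v_m be unit vectors in ℝ^d with ⟨u,vᵢ⟩ < 0 for all i and ⟨vᵢ,vⱼ⟩ ≤ α for i ≠ j. Setting cᵢ = −⟨u,vᵢ⟩ > 0, we have Σᵢ cᵢ² ≤ 1 + α(Σᵢ cᵢ)². -/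
/-!
Put `cᵢ = -⟪u, vᵢ⟫` and `s = ∑ cᵢ vᵢ`. Then `⟪u, s⟫ = -∑ cᵢ²`, and since the `cᵢ` are positive
the Gram bound `⟪vᵢ, vⱼ⟫ ≤ α` gives `‖s‖² ≤ (1 - α) ∑ cᵢ² + α (∑ cᵢ)²`. Expanding
`0 ≤ ‖u + s‖²` yields `(1 + α) ∑ cᵢ² ≤ 1 + α (∑ cᵢ)²`, and `α ≥ 0` finishes.
-/

open Finset RealInnerProductSpace

variable {E ι : Type*} [NormedAddCommGroup E] [InnerProductSpace ℝ E] [Fintype ι]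

lemma norm_sum_smul_sq (c : ι → ℝ) (v : ι → E) :
    ‖∑ i, c i • v i‖ ^ 2 = ∑ i, ∑ j, c i * c j * ⟪v i, v j⟫ := by
  rw [← real_inner_self_eq_norm_sq, sum_inner]
  refine sum_congr rfl fun i _ => ?_
  rw [real_inner_smul_left, inner_sum, mul_sum]
  exact sum_congr rfl fun j _ => by rw [real_inner_smul_right]; ring

lemma inner_sum_smul (u : E) (c : ι → ℝ) (v : ι → E) :
    ⟪u, ∑ i, c i • v i⟫ = ∑ i, c i * ⟪u, v i⟫ := by
  simp only [inner_sum, real_inner_smul_right]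

lemma norm_sum_smul_sq_le_of_inner_le [DecidableEq ι] {α : ℝ} {c : ι → ℝ} {v : ι → E}
    (hc : ∀ i, 0 ≤ c i) (hv : ∀ i, ‖v i‖ = 1) (hpair : ∀ i j, i ≠ j → ⟪v i, v j⟫ ≤ α) :
    ‖∑ i, c i • v i‖ ^ 2 ≤ (1 - α) * ∑ i, c i ^ 2 + α * (∑ i, c i) ^ 2 := by
  have hgram : ∀ i j, ⟪v i, v j⟫ ≤ α + (1 - α) * if i = j then 1 else 0 := by
    intro i j
    by_cases hij : i = j
    · simp [hij, hv]
    · simpa [hij] using hpair i j hij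
  calc ‖∑ i, c i • v i‖ ^ 2 = ∑ i, ∑ j, c i * c j * ⟪v i, v j⟫ := norm_sum_smul_sq c v
    _ ≤ ∑ i, ∑ j, c i * c j * (α + (1 - α) * if i = j then 1 else 0) := by
      gcongr with i _ j _
      exacts [mul_nonneg (hc i) (hc j), hgram i j]
    _ = α * ∑ i, ∑ j, c i * c j + (1 - α) * ∑ i, ∑ j, if i = j then c i * c j else 0 := by
      simp only [mul_sum, ← sum_add_distrib]
      exact sum_congr rfl fun i _ => sum_congr rfl fun j _ => by split_ifs <;> ring
    _ = (1 - α) * ∑ i, c i ^ 2 + α * (∑ i, c i) ^ 2 := by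
      simp only [← sum_mul_sum, sum_ite_eq, mem_univ, if_true, sq]
      ring

theorem neg_neighborhood_restated_general {d m : ℕ} (α : ℝ) (hα0 : 0 ≤ α)
    (u : EuclideanSpace ℝ (Fin d)) (v : Fin m → EuclideanSpace ℝ (Fin d))
    (hu : ‖u‖ = 1) (hv : ∀ i, ‖v i‖ = 1)
    (hneg : ∀ i, (inner ℝ u (v i) : ℝ) < 0)
    (hpair : ∀ i j, i ≠ j → (inner ℝ (v i) (v j) : ℝ) ≤ α) :
    ∑ i, (-(inner ℝ u (v i) : ℝ)) ^ 2 ≤ 1 + α * (∑ i, -(inner ℝ u (v i) : ℝ)) ^ 2 := by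
  set c : Fin m → ℝ := fun i => -⟪u, v i⟫
  set s := ∑ i, c i • v i
  have hus : ⟪u, s⟫ = -∑ i, c i ^ 2 := by
    simp only [s, inner_sum_smul, c, ← sum_neg_distrib]
    exact sum_congr rfl fun i _ => by ring
  have hs : ‖s‖ ^ 2 ≤ (1 - α) * ∑ i, c i ^ 2 + α * (∑ i, c i) ^ 2 :=
    norm_sum_smul_sq_le_of_inner_le (fun i => (neg_pos.mpr (hneg i)).le) hv hpair
  have hexpand : ‖u + s‖ ^ 2 = 1 - 2 * ∑ i, c i ^ 2 + ‖s‖ ^ 2 := by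
    rw [norm_add_sq_real, hu, hus]; ring
  have hq : 0 ≤ ∑ i, c i ^ 2 := sum_nonneg fun i _ => sq_nonneg (c i)
  linarith [sq_nonneg ‖u + s‖, mul_nonneg hα0 hq]

theorem neg_neighborhood_restated {d m : ℕ} (α : ℝ) (hα0 : 0 ≤ α) (hα1 : α < 1)
    (u : EuclideanSpace ℝ (Fin d)) (v : Fin m → EuclideanSpace ℝ (Fin d))
    (hu : ‖u‖ = 1) (hv : ∀ i, ‖v i‖ = 1)
    (hneg : ∀ i, (inner ℝ u (v i) : ℝ) < 0)
    (hpair : ∀ i j, i ≠ j → (inner ℝ (v i) (v j) : ℝ) ≤ α) :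
    ∑ i, (-(inner ℝ u (v i) : ℝ)) ^ 2 ≤ 1 + α * (∑ i, -(inner ℝ u (v i) : ℝ)) ^ 2 :=
  neg_neighborhood_restated_general α hα0 u v hu hv hneg hpair
end
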